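/- arXiv:2401.04179 — 2 statements merged into one kernel-verified Lean document; each statement's English description precedes it below -/
import Mathlib

section
/- Let U₁ ≤ U₂ < 0 and V₁ ≤ V₂ be real numbers such that the closed rectangle [U₁,U₂] × [V₁,V₂] is contained in U, let δ′ > 0, and let Ψ be a smooth fixed-mode solution of the Regge–Wheeler equation on U. Define the weighted energies E^{δ′}_u := |u|^{δ′} · ∫_{V₁}^{V₂} [ (∂ᵥΨ)² + V·Ψ² ](u, v̄) dv̄ and Ē^{δ′}_v := ∫_{U₁}^{U₂} |ū|^{δ′} · [ (∂ᵤΨ)² + V·Ψ² ](ū, v) dū. Then E^{δ′}_{U₂} + Ē^{δ′}_{V₂} ≤ E^{δ′}_{U₁} + Ē^{δ′}_{V₁}; that is, the |u|^{δ′}-weighted energy flux through the future boundary of the rectangle is bounded by that through its past boundary. (Fixed-angular-mode form of the |u|-weighted energy estimate of Lemma 6.3, obtained by multiplying the equation by |u|^{δ′}∂_TΨ; the bulk term has a favourable sign since u < 0 and δ′ > 0.) -/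
open scoped ContDiff

noncomputable section

/-- Partial derivative with respect to the first (`u`) null coordinate. -/
def pdu (f : ℝ × ℝ → ℝ) : ℝ × ℝ → ℝ := fun p => deriv (fun x => f (x, p.2)) p.1

/-- Partial derivative with respect to the second (`v`) null coordinate. -/
def pdv (f : ℝ × ℝ → ℝ) : ℝ × ℝ → ℝ := fun p => deriv (fun y => f (p.1, y)) p.2

/-- `D = 1 - 2M/r`. -/
def Dfun (M : ℝ) (r : ℝ × ℝ → ℝ) : ℝ × ℝ → ℝ := fun p => 1 - 2 * M / r p

/-- The fixed-mode Regge–Wheeler potential `V = (D/r²)·(ℓ(ℓ+1) − 6M/r)`. -/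
def Vpot (M : ℝ) (r : ℝ × ℝ → ℝ) (ℓ : ℕ) : ℝ × ℝ → ℝ := fun p =>
  Dfun M r p / (r p) ^ 2 * (((ℓ * (ℓ + 1) : ℕ) : ℝ) - 6 * M / r p)

/-!
Put `e := (∂ᵥΨ)² + VΨ²` and `ē := (∂ᵤΨ)² + VΨ²`. Since `V` is a function of `r` and
`∂ᵤr = -∂ᵥr`, we have `∂ᵤV = -∂ᵥV`; together with `∂ᵤ∂ᵥΨ = -VΨ` this gives the conservation law
`∂ᵤe + ∂ᵥē = 0`. For the weight `w(u) = |u|^δ'` the current `(w e, w ē)` therefore has divergence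
`w'(u) e`, which is `≤ 0` because `w` decreases on `u < 0` and `V ≥ 0` when `ℓ ≥ 2`, `r > 2M`.
Green's theorem on the rectangle bounds the flux through the future boundary by the flux through
the past one.
-/

open Set Topology

section PartialDerivatives

variable {f g : ℝ × ℝ → ℝ} {p : ℝ × ℝ}

theorem HasFDerivAt.hasDerivAt_pdu {f' : ℝ × ℝ →L[ℝ] ℝ} (hf : HasFDerivAt f f' p) :
    HasDerivAt (fun x => f (x, p.2)) (f' (1, 0)) p.1 :=
  hf.comp_hasDerivAt p.1 ((hasDerivAt_id _).prodMk (hasDerivAt_const _ _))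

theorem HasFDerivAt.hasDerivAt_pdv {f' : ℝ × ℝ →L[ℝ] ℝ} (hf : HasFDerivAt f f' p) :
    HasDerivAt (fun y => f (p.1, y)) (f' (0, 1)) p.2 :=
  hf.comp_hasDerivAt p.2 ((hasDerivAt_const _ _).prodMk (hasDerivAt_id _))

theorem pdu_eq_fderiv (hf : DifferentiableAt ℝ f p) : pdu f p = fderiv ℝ f p (1, 0) :=
  hf.hasFDerivAt.hasDerivAt_pdu.deriv

theorem pdv_eq_fderiv (hf : DifferentiableAt ℝ f p) : pdv f p = fderiv ℝ f p (0, 1) :=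
  hf.hasFDerivAt.hasDerivAt_pdv.deriv

theorem DifferentiableAt.hasDerivAt_pdu (hf : DifferentiableAt ℝ f p) :
    HasDerivAt (fun x => f (x, p.2)) (pdu f p) p.1 :=
  pdu_eq_fderiv hf ▸ hf.hasFDerivAt.hasDerivAt_pdu

theorem DifferentiableAt.hasDerivAt_pdv (hf : DifferentiableAt ℝ f p) :
    HasDerivAt (fun y => f (p.1, y)) (pdv f p) p.2 :=
  pdv_eq_fderiv hf ▸ hf.hasFDerivAt.hasDerivAt_pdv

theorem pdu_add (hf : DifferentiableAt ℝ f p) (hg : DifferentiableAt ℝ g p) :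
    pdu (fun q => f q + g q) p = pdu f p + pdu g p :=
  (hf.hasDerivAt_pdu.add hg.hasDerivAt_pdu).deriv

theorem pdv_add (hf : DifferentiableAt ℝ f p) (hg : DifferentiableAt ℝ g p) :
    pdv (fun q => f q + g q) p = pdv f p + pdv g p :=
  (hf.hasDerivAt_pdv.add hg.hasDerivAt_pdv).deriv

theorem pdu_mul (hf : DifferentiableAt ℝ f p) (hg : DifferentiableAt ℝ g p) :
    pdu (fun q => f q * g q) p = pdu f p * g p + f p * pdu g p :=
  (hf.hasDerivAt_pdu.mul hg.hasDerivAt_pdu).deriv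

theorem pdv_mul (hf : DifferentiableAt ℝ f p) (hg : DifferentiableAt ℝ g p) :
    pdv (fun q => f q * g q) p = pdv f p * g p + f p * pdv g p :=
  (hf.hasDerivAt_pdv.mul hg.hasDerivAt_pdv).deriv

theorem pdu_sq (hf : DifferentiableAt ℝ f p) :
    pdu (fun q => f q ^ 2) p = 2 * f p * pdu f p := by
  simp only [sq, pdu_mul hf hf]
  ring

theorem pdv_sq (hf : DifferentiableAt ℝ f p) :
    pdv (fun q => f q ^ 2) p = 2 * f p * pdv f p := by
  simp only [sq, pdv_mul hf hf]
  ring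

theorem pdu_comp {h : ℝ → ℝ} (hh : DifferentiableAt ℝ h (f p))
    (hf : DifferentiableAt ℝ f p) : pdu (fun q => h (f q)) p = deriv h (f p) * pdu f p :=
  (hh.hasDerivAt.comp p.1 hf.hasDerivAt_pdu).deriv

theorem pdv_comp {h : ℝ → ℝ} (hh : DifferentiableAt ℝ h (f p))
    (hf : DifferentiableAt ℝ f p) : pdv (fun q => h (f q)) p = deriv h (f p) * pdv f p :=
  (hh.hasDerivAt.comp p.2 hf.hasDerivAt_pdv).deriv

theorem pdu_comp_fst (h : ℝ → ℝ) : pdu (fun q => h q.1) p = deriv h p.1 := rfl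

theorem pdv_comp_fst (h : ℝ → ℝ) : pdv (fun q => h q.1) p = 0 :=
  deriv_const p.2 (h p.1)

theorem ContDiffOn.pdu_of_isOpen {s : Set (ℝ × ℝ)} {m n : WithTop ℕ∞}
    (hf : ContDiffOn ℝ n f s) (hs : IsOpen s) (hmn : m + 1 ≤ n) : ContDiffOn ℝ m (pdu f) s :=
  ((hf.fderiv_of_isOpen hs hmn).clm_apply (contDiffOn_const (c := ((1 : ℝ), (0 : ℝ))))).congr
    fun q hq => pdu_eq_fderiv <| (hf.differentiableOn (by
      rintro rfl; simp at hmn) q hq).differentiableAt (hs.mem_nhds hq)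

theorem ContDiffOn.pdv_of_isOpen {s : Set (ℝ × ℝ)} {m n : WithTop ℕ∞}
    (hf : ContDiffOn ℝ n f s) (hs : IsOpen s) (hmn : m + 1 ≤ n) : ContDiffOn ℝ m (pdv f) s :=
  ((hf.fderiv_of_isOpen hs hmn).clm_apply (contDiffOn_const (c := ((0 : ℝ), (1 : ℝ))))).congr
    fun q hq => pdv_eq_fderiv <| (hf.differentiableOn (by
      rintro rfl; simp at hmn) q hq).differentiableAt (hs.mem_nhds hq)

theorem Filter.EventuallyEq.pdu_eq (h : f =ᶠ[𝓝 p] g) : pdu f p = pdu g p :=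
  (h.comp_tendsto ((continuous_id.prodMk continuous_const).tendsto' p.1 p rfl)).deriv_eq

theorem Filter.EventuallyEq.pdv_eq (h : f =ᶠ[𝓝 p] g) : pdv f p = pdv g p :=
  (h.comp_tendsto ((continuous_const.prodMk continuous_id).tendsto' p.2 p rfl)).deriv_eq

theorem ContDiffAt.pdu_eventuallyEq_fderiv (hf : ContDiffAt ℝ 1 f p) :
    pdu f =ᶠ[𝓝 p] fun q => fderiv ℝ f q (1, 0) :=
  (hf.eventually (by simp)).mono fun q hq => pdu_eq_fderiv (hq.differentiableAt one_ne_zero)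

theorem ContDiffAt.pdv_eventuallyEq_fderiv (hf : ContDiffAt ℝ 1 f p) :
    pdv f =ᶠ[𝓝 p] fun q => fderiv ℝ f q (0, 1) :=
  (hf.eventually (by simp)).mono fun q hq => pdv_eq_fderiv (hq.differentiableAt one_ne_zero)

theorem ContDiffAt.differentiableAt_pdu (hf : ContDiffAt ℝ 2 f p) :
    DifferentiableAt ℝ (pdu f) p :=
  (((hf.fderiv_right (m := 1) le_rfl).differentiableAt one_ne_zero).clm_apply
    (differentiableAt_const _)).congr_of_eventuallyEq (hf.of_le one_le_two).pdu_eventuallyEq_fderiv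

theorem ContDiffAt.differentiableAt_pdv (hf : ContDiffAt ℝ 2 f p) :
    DifferentiableAt ℝ (pdv f) p :=
  (((hf.fderiv_right (m := 1) le_rfl).differentiableAt one_ne_zero).clm_apply
    (differentiableAt_const _)).congr_of_eventuallyEq (hf.of_le one_le_two).pdv_eventuallyEq_fderiv

theorem pdv_pdu_eq_pdu_pdv (hf : ContDiffAt ℝ 2 f p) : pdv (pdu f) p = pdu (pdv f) p := by
  have hf' : ∀ᶠ q in 𝓝 p, HasFDerivAt f (fderiv ℝ f q) q :=
    (hf.eventually (by simp)).mono fun q hq => (hq.differentiableAt two_ne_zero).hasFDerivAt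
  have hf'' : HasFDerivAt (fderiv ℝ f) (fderiv ℝ (fderiv ℝ f) p) p :=
    ((hf.fderiv_right (m := 1) le_rfl).differentiableAt one_ne_zero).hasFDerivAt
  rw [(hf.of_le one_le_two).pdu_eventuallyEq_fderiv.pdv_eq,
    (hf.of_le one_le_two).pdv_eventuallyEq_fderiv.pdu_eq]
  calc pdv (fun q => fderiv ℝ f q (1, 0)) p = fderiv ℝ (fderiv ℝ f) p (0, 1) (1, 0) :=
        ((ContinuousLinearMap.apply ℝ ℝ ((1 : ℝ), (0 : ℝ))).hasFDerivAt.comp p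
          hf'').hasDerivAt_pdv.deriv
    _ = fderiv ℝ (fderiv ℝ f) p (1, 0) (0, 1) :=
        second_derivative_symmetric_of_eventually hf' hf'' _ _
    _ = pdu (fun q => fderiv ℝ f q (0, 1)) p :=
        (((ContinuousLinearMap.apply ℝ ℝ ((0 : ℝ), (1 : ℝ))).hasFDerivAt.comp p
          hf'').hasDerivAt_pdu.deriv).symm

theorem pdu_weight_mul_add_pdv_weight_mul {w : ℝ → ℝ} (hw : DifferentiableAt ℝ w p.1)
    (hf : DifferentiableAt ℝ f p) (hg : DifferentiableAt ℝ g p) :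
    pdu (fun q => w q.1 * f q) p + pdv (fun q => w q.1 * g q) p =
      deriv w p.1 * f p + w p.1 * (pdu f p + pdv g p) := by
  have hw' : DifferentiableAt ℝ (fun q : ℝ × ℝ => w q.1) p := hw.comp p differentiableAt_fst
  rw [pdu_mul hw' hf, pdv_mul hw' hg, pdu_comp_fst, pdv_comp_fst]
  ring

end PartialDerivatives

theorem integral_boundary_le_of_pdu_add_pdv_nonpos {f g : ℝ × ℝ → ℝ} {W : Set (ℝ × ℝ)}
    {a₁ b₁ a₂ b₂ : ℝ} (hW : IsOpen W) (hf : ContDiffOn ℝ 1 f W)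
    (hg : ContDiffOn ℝ 1 g W) (ha : a₁ ≤ b₁) (hb : a₂ ≤ b₂)
    (hsub : Icc a₁ b₁ ×ˢ Icc a₂ b₂ ⊆ W)
    (hdiv : ∀ q ∈ Icc a₁ b₁ ×ˢ Icc a₂ b₂, pdu f q + pdv g q ≤ 0) :
    (∫ y in a₂..b₂, f (b₁, y)) + (∫ x in a₁..b₁, g (x, b₂)) ≤
      (∫ y in a₂..b₂, f (a₁, y)) + ∫ x in a₁..b₁, g (x, a₂) := by
  have hdiff : ∀ {h : ℝ × ℝ → ℝ}, ContDiffOn ℝ 1 h W →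
      ∀ q ∈ W, HasFDerivAt h (fderiv ℝ h q) q :=
    fun hh q hq => ((hh.differentiableOn one_ne_zero) q hq |>.differentiableAt
      (hW.mem_nhds hq)).hasFDerivAt
  have hrect : uIcc a₁ b₁ ×ˢ uIcc a₂ b₂ = Icc a₁ b₁ ×ˢ Icc a₂ b₂ := by
    rw [uIcc_of_le ha, uIcc_of_le hb]
  have hinterior :
      Ioo (min a₁ b₁) (max a₁ b₁) ×ˢ Ioo (min a₂ b₂) (max a₂ b₂) ⊆ W := by
    rw [min_eq_left ha, max_eq_right ha, min_eq_left hb, max_eq_right hb]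
    exact (Set.prod_mono Ioo_subset_Icc_self Ioo_subset_Icc_self).trans hsub
  have hcont : ContinuousOn (fun q => fderiv ℝ f q (1, 0) + fderiv ℝ g q (0, 1)) W :=
    ((hf.continuousOn_fderiv_of_isOpen hW le_rfl).clm_apply continuousOn_const).add
      ((hg.continuousOn_fderiv_of_isOpen hW le_rfl).clm_apply continuousOn_const)
  have hgreen := MeasureTheory.integral2_divergence_prod_of_hasFDerivAt f g (fderiv ℝ f)
    (fderiv ℝ g) a₁ a₂ b₁ b₂ (hrect ▸ hf.continuousOn.mono hsub)
    (hrect ▸ hg.continuousOn.mono hsub) (fun q hq => hdiff hf q (hinterior hq))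
    (fun q hq => hdiff hg q (hinterior hq))
    (hrect ▸ (hcont.mono hsub).integrableOn_compact (isCompact_Icc.prod isCompact_Icc))
  have hbulk :
      (∫ x in a₁..b₁, ∫ y in a₂..b₂, fderiv ℝ f (x, y) (1, 0) + fderiv ℝ g (x, y) (0, 1)) ≤ 0 := by
    rw [← neg_nonneg, ← intervalIntegral.integral_neg]
    refine intervalIntegral.integral_nonneg ha fun x hx => ?_
    rw [← intervalIntegral.integral_neg]
    refine intervalIntegral.integral_nonneg hb fun y hy => ?_
    have hq : (x, y) ∈ W := hsub ⟨hx, hy⟩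
    rw [← pdu_eq_fderiv (hdiff hf _ hq).differentiableAt,
      ← pdv_eq_fderiv (hdiff hg _ hq).differentiableAt]
    linarith [hdiv (x, y) ⟨hx, hy⟩]
  linarith

section EnergyCurrent

variable {V Ψ : ℝ × ℝ → ℝ}

-- Energy densities on the outgoing cones `u = const` and on the ingoing cones `v = const`.
def outgoingEnergyDensity (V Ψ : ℝ × ℝ → ℝ) : ℝ × ℝ → ℝ :=
  fun q => pdv Ψ q ^ 2 + V q * Ψ q ^ 2

def ingoingEnergyDensity (V Ψ : ℝ × ℝ → ℝ) : ℝ × ℝ → ℝ :=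
  fun q => pdu Ψ q ^ 2 + V q * Ψ q ^ 2

theorem outgoingEnergyDensity_nonneg {q : ℝ × ℝ} (hV : 0 ≤ V q) :
    0 ≤ outgoingEnergyDensity V Ψ q := by
  unfold outgoingEnergyDensity
  positivity

theorem pdu_outgoingEnergyDensity_add_pdv_ingoingEnergyDensity {p : ℝ × ℝ}
    (hΨ : ContDiffAt ℝ 2 Ψ p) (hV : DifferentiableAt ℝ V p)
    (hwave : pdu (pdv Ψ) p + V p * Ψ p = 0) (hVcons : pdu V p + pdv V p = 0) :
    pdu (outgoingEnergyDensity V Ψ) p + pdv (ingoingEnergyDensity V Ψ) p = 0 := by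
  have hΨ' := hΨ.differentiableAt two_ne_zero
  have hΨsq : DifferentiableAt ℝ (fun q => Ψ q ^ 2) p := hΨ'.pow 2
  have hVΨsq : DifferentiableAt ℝ (fun q => V q * Ψ q ^ 2) p := hV.mul hΨsq
  have hpdvsq : DifferentiableAt ℝ (fun q => pdv Ψ q ^ 2) p := hΨ.differentiableAt_pdv.pow 2
  have hpdusq : DifferentiableAt ℝ (fun q => pdu Ψ q ^ 2) p := hΨ.differentiableAt_pdu.pow 2
  unfold outgoingEnergyDensity ingoingEnergyDensity
  rw [pdu_add hpdvsq hVΨsq, pdv_add hpdusq hVΨsq, pdu_sq hΨ.differentiableAt_pdv,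
    pdv_sq hΨ.differentiableAt_pdu, pdu_mul hV hΨsq, pdv_mul hV hΨsq, pdu_sq hΨ', pdv_sq hΨ',
    pdv_pdu_eq_pdu_pdv hΨ]
  linear_combination (2 * pdv Ψ p + 2 * pdu Ψ p) * hwave + Ψ p ^ 2 * hVcons

theorem weighted_energy_flux_le {w : ℝ → ℝ} {U : Set (ℝ × ℝ)} {I : Set ℝ}
    {U₁ U₂ V₁ V₂ : ℝ} (hU : IsOpen U) (hI : IsOpen I) (hΨ : ContDiffOn ℝ 2 Ψ U)
    (hV : ContDiffOn ℝ 1 V U) (hw : ContDiffOn ℝ 1 w I)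
    (hwave : ∀ p ∈ U, pdu (pdv Ψ) p + V p * Ψ p = 0)
    (hVcons : ∀ p ∈ U, pdu V p + pdv V p = 0) (hVnn : ∀ p ∈ U, 0 ≤ V p)
    (hU12 : U₁ ≤ U₂) (hV12 : V₁ ≤ V₂) (hrect : Icc U₁ U₂ ×ˢ Icc V₁ V₂ ⊆ U)
    (hwI : Icc U₁ U₂ ⊆ I) (hw' : ∀ u ∈ Icc U₁ U₂, deriv w u ≤ 0) :
    w U₂ * (∫ v in V₁..V₂, outgoingEnergyDensity V Ψ (U₂, v)) +
        (∫ u in U₁..U₂, w u * ingoingEnergyDensity V Ψ (u, V₂)) ≤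
      w U₁ * (∫ v in V₁..V₂, outgoingEnergyDensity V Ψ (U₁, v)) +
        (∫ u in U₁..U₂, w u * ingoingEnergyDensity V Ψ (u, V₁)) := by
  have hW : IsOpen (U ∩ Prod.fst ⁻¹' I) := hU.inter (hI.preimage continuous_fst)
  have hΨ1 : ContDiffOn ℝ 1 Ψ U := hΨ.of_le one_le_two
  have hout : ContDiffOn ℝ 1 (outgoingEnergyDensity V Ψ) U :=
    ((hΨ.pdv_of_isOpen hU le_rfl).pow 2).add (hV.mul (hΨ1.pow 2))
  have hin : ContDiffOn ℝ 1 (ingoingEnergyDensity V Ψ) U :=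
    ((hΨ.pdu_of_isOpen hU le_rfl).pow 2).add (hV.mul (hΨ1.pow 2))
  have hwfst : ContDiffOn ℝ 1 (fun q : ℝ × ℝ => w q.1) (U ∩ Prod.fst ⁻¹' I) :=
    hw.comp contDiffOn_fst fun q hq => hq.2
  have hdiv : ∀ q ∈ Icc U₁ U₂ ×ˢ Icc V₁ V₂,
      pdu (fun q => w q.1 * outgoingEnergyDensity V Ψ q) q +
        pdv (fun q => w q.1 * ingoingEnergyDensity V Ψ q) q ≤ 0 := by
    intro q hq
    have hqU := hrect hq
    have hdiff : ∀ {f : ℝ × ℝ → ℝ}, ContDiffOn ℝ 1 f U → DifferentiableAt ℝ f q :=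
      fun hf => (hf.contDiffAt (hU.mem_nhds hqU)).differentiableAt one_ne_zero
    rw [pdu_weight_mul_add_pdv_weight_mul
        ((hw.contDiffAt (hI.mem_nhds (hwI hq.1))).differentiableAt one_ne_zero)
        (hdiff hout) (hdiff hin),
      pdu_outgoingEnergyDensity_add_pdv_ingoingEnergyDensity (hΨ.contDiffAt (hU.mem_nhds hqU))
        (hdiff hV) (hwave q hqU) (hVcons q hqU), mul_zero, add_zero]
    exact mul_nonpos_of_nonpos_of_nonneg (hw' q.1 hq.1)
      (outgoingEnergyDensity_nonneg (hVnn q hqU))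
  simpa only [intervalIntegral.integral_const_mul] using
    integral_boundary_le_of_pdu_add_pdv_nonpos hW (hwfst.mul (hout.mono inter_subset_left))
      (hwfst.mul (hin.mono inter_subset_left)) hU12 hV12
      (subset_inter hrect fun q hq => hwI hq.1) hdiv

end EnergyCurrent

theorem contDiffOn_abs_rpow_Iio {n : WithTop ℕ∞} (δ : ℝ) :
    ContDiffOn ℝ n (fun u : ℝ => |u| ^ δ) (Iio 0) :=
  ((contDiffOn_id.neg).rpow_const_of_ne fun u hu => neg_ne_zero.2 (ne_of_lt hu)).congr
    fun u hu => by rw [abs_of_neg hu]; rfl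

theorem deriv_abs_rpow_nonpos {u δ : ℝ} (hu : u < 0) (hδ : 0 ≤ δ) :
    deriv (fun u : ℝ => |u| ^ δ) u ≤ 0 := by
  have hneg : HasDerivAt (fun x : ℝ => (-x) ^ δ) (δ * (-u) ^ (δ - 1) * -1) u :=
    (Real.hasDerivAt_rpow_const (Or.inl (neg_ne_zero.2 hu.ne))).comp u (hasDerivAt_neg u)
  have habs : (fun x : ℝ => |x| ^ δ) =ᶠ[𝓝 u] fun x => (-x) ^ δ :=
    (eventually_lt_nhds hu).mono fun x hx => by simp only [abs_of_neg hx]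
  rw [(hneg.congr_of_eventuallyEq habs).deriv]
  have : 0 ≤ δ * (-u) ^ (δ - 1) := mul_nonneg hδ (Real.rpow_nonneg (by linarith) _)
  linarith

section ReggeWheelerPotential

variable {M : ℝ} {ℓ : ℕ}

def reggeWheelerProfile (M : ℝ) (ℓ : ℕ) (s : ℝ) : ℝ :=
  (1 - 2 * M / s) / s ^ 2 * (((ℓ * (ℓ + 1) : ℕ) : ℝ) - 6 * M / s)

theorem Vpot_eq_reggeWheelerProfile_comp (r : ℝ × ℝ → ℝ) :
    Vpot M r ℓ = fun p => reggeWheelerProfile M ℓ (r p) := rfl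

theorem contDiffOn_reggeWheelerProfile {n : WithTop ℕ∞} :
    ContDiffOn ℝ n (reggeWheelerProfile M ℓ) {0}ᶜ := by
  unfold reggeWheelerProfile
  fun_prop (disch := simp_all)

theorem reggeWheelerProfile_nonneg {s : ℝ} (hM : 0 ≤ M) (hℓ : 2 ≤ ℓ) (hs : 2 * M < s) :
    0 ≤ reggeWheelerProfile M ℓ s := by
  have hs0 : 0 < s := by linarith
  have hD : 0 ≤ 1 - 2 * M / s := by rw [sub_nonneg, div_le_one hs0]; exact hs.le
  have hℓ' : (6 : ℝ) ≤ ((ℓ * (ℓ + 1) : ℕ) : ℝ) := by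
    exact_mod_cast Nat.mul_le_mul hℓ (by omega : 3 ≤ ℓ + 1)
  have hM' : 6 * M / s ≤ 3 := by rw [div_le_iff₀ hs0]; linarith
  unfold reggeWheelerProfile
  exact mul_nonneg (div_nonneg hD (sq_nonneg s)) (by linarith)

end ReggeWheelerPotential

/-- The `|u|^{δ'}`-weighted energy estimate for the fixed-angular-mode Regge–Wheeler
equation (Lemma 6.3, fixed-angular-mode form). -/
theorem regge_wheeler_weighted_energy_estimate
    (M : ℝ) (hM : 0 ≤ M)
    (U : Set (ℝ × ℝ)) (hUopen : IsOpen U)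
    (r : ℝ × ℝ → ℝ) (hr : ContDiffOn ℝ ∞ r U)
    (hr2M : ∀ p ∈ U, 2 * M < r p)
    (hru : ∀ p ∈ U, pdu r p = -(1 - 2 * M / r p))
    (hrv : ∀ p ∈ U, pdv r p = 1 - 2 * M / r p)
    (ℓ : ℕ) (hℓ : 2 ≤ ℓ)
    (U₁ U₂ V₁ V₂ : ℝ) (hU12 : U₁ ≤ U₂) (hU2 : U₂ < 0) (hV12 : V₁ ≤ V₂)
    (hrect : Set.Icc U₁ U₂ ×ˢ Set.Icc V₁ V₂ ⊆ U)
    (δ' : ℝ) (hδ' : 0 < δ')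
    (Ψ : ℝ × ℝ → ℝ) (hΨ : ContDiffOn ℝ ∞ Ψ U)
    (hRW : ∀ p ∈ U,
      pdu (pdv Ψ) p + Dfun M r p / (r p) ^ 2 * ((ℓ * (ℓ + 1) : ℕ) : ℝ) * Ψ p
        - 6 * M * Dfun M r p / (r p) ^ 3 * Ψ p = 0) :
    (|U₂| ^ δ' * ∫ v in V₁..V₂, ((pdv Ψ (U₂, v)) ^ 2 + Vpot M r ℓ (U₂, v) * (Ψ (U₂, v)) ^ 2)) +
        (∫ u in U₁..U₂, |u| ^ δ' * ((pdu Ψ (u, V₂)) ^ 2 + Vpot M r ℓ (u, V₂) * (Ψ (u, V₂)) ^ 2)) ≤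
      (|U₁| ^ δ' * ∫ v in V₁..V₂, ((pdv Ψ (U₁, v)) ^ 2 + Vpot M r ℓ (U₁, v) * (Ψ (U₁, v)) ^ 2)) +
        (∫ u in U₁..U₂, |u| ^ δ' * ((pdu Ψ (u, V₁)) ^ 2 + Vpot M r ℓ (u, V₁) * (Ψ (u, V₁)) ^ 2)) := by
  have hr0 : ∀ p ∈ U, r p ≠ 0 := fun p hp => by linarith [hr2M p hp]
  have hV : ContDiffOn ℝ 1 (Vpot M r ℓ) U :=
    contDiffOn_reggeWheelerProfile.comp (hr.of_le ENat.LEInfty.out) fun p hp => hr0 p hp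
  have hVcons : ∀ p ∈ U, pdu (Vpot M r ℓ) p + pdv (Vpot M r ℓ) p = 0 := by
    intro p hp
    have hrp := (hr.contDiffAt (hUopen.mem_nhds hp)).differentiableAt (by simp)
    have hVp := (contDiffOn_reggeWheelerProfile (M := M) (ℓ := ℓ) (n := 1)).differentiableOn
      one_ne_zero (r p) (hr0 p hp) |>.differentiableAt (isOpen_compl_singleton.mem_nhds (hr0 p hp))
    rw [Vpot_eq_reggeWheelerProfile_comp, pdu_comp hVp hrp, pdv_comp hVp hrp, hru p hp, hrv p hp]
    ring
  have hwave : ∀ p ∈ U, pdu (pdv Ψ) p + Vpot M r ℓ p * Ψ p = 0 := by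
    intro p hp
    rw [← hRW p hp]
    unfold Vpot
    field_simp [hr0 p hp]
    ring
  exact weighted_energy_flux_le (w := fun u => |u| ^ δ') hUopen isOpen_Iio
    (hΨ.of_le ENat.LEInfty.out) hV (contDiffOn_abs_rpow_Iio δ') hwave hVcons
    (fun p hp => reggeWheelerProfile_nonneg hM hℓ (hr2M p hp)) hU12 hV12 hrect
    (fun u hu => hu.2.trans_lt hU2) fun u hu => deriv_abs_rpow_nonpos (hu.2.trans_lt hU2) hδ'.le
end
end

section
/- For every integer ℓ ≥ 2 one has (−1)^ℓ · Σ_{n=0}^{ℓ−2} [ (−1)^n / ( n! · (n+2)! ) ] · ( (ℓ+2+n)! / (ℓ−2−n)! ) = (1/2) · ( (ℓ+2)! / (ℓ−2)! ). (This is identity (14.9), proved by a generating-function argument.) -/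
/-!
Writing `ℓ = m + 2`, the `n`-th summand multiplied by `(-1)^ℓ` is `(m + 2)!/m!` times
`(-1)^(m-n) C(m, n) C(m + 4 + n, m + 2)`. The alternating sum `∑ₙ (-1)^(m-n) C(m, n) f(y + n)`
is the `m`-th forward difference of `f` at `y`, and `Δ^m C(·, m + 2) = C(·, 2)`, so the sum
collapses to `(m + 2)!/m! · C(m + 4, 2) = (m + 4)!/(2 m!)`.
-/

open Finset Nat

theorem sum_neg_one_pow_mul_choose_mul_choose_add (m j y : ℕ) :
    ∑ k ∈ range (m + 1), (-1 : ℤ) ^ (m - k) * m.choose k * (y + k).choose (m + j) =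
      y.choose j := by
  have h := fwdDiff_iter_eq_sum_shift 1 (fun x ↦ x.choose (m + j) : ℕ → ℤ) m y
  rw [fwdDiff_iter_choose] at h
  simpa using h.symm

theorem factorial_div_mul_choose_mul_choose {K : Type*} [Field K] [CharZero K] {m n : ℕ}
    (i j : ℕ) (hn : n ≤ m) :
    ((m + j)! / m ! : K) * (m.choose n * (m + j + i + n).choose (m + j)) =
      (m + j + i + n)! / (m - n)! / (n ! * (n + i)!) := by
  rw [Nat.cast_choose K hn, Nat.cast_choose K (by omega : m + j ≤ m + j + i + n),
    show m + j + i + n - (m + j) = n + i by omega]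
  have : ((m + j)! : K) ≠ 0 := mod_cast (m + j).factorial_ne_zero
  have : (m ! : K) ≠ 0 := mod_cast m.factorial_ne_zero
  field_simp

theorem neg_one_pow_mul_neg_one_pow_sub {R : Type*} [Monoid R] [HasDistribNeg R] {m n : ℕ}
    (hn : n ≤ m) : (-1 : R) ^ m * (-1) ^ (m - n) = (-1) ^ n := by
  rw [← pow_add, show m + (m - n) = n + 2 * (m - n) by omega, pow_add, pow_mul, neg_one_sq,
    one_pow, mul_one]

theorem sum_neg_one_pow_div_factorial_mul_factorial {K : Type*} [Field K] [CharZero K]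
    (m i j : ℕ) :
    ∑ n ∈ range (m + 1), (-1 : K) ^ n / (n ! * (n + i)!) * ((m + j + i + n)! / (m - n)!) =
      (-1) ^ m * ((m + j)! / m !) * (m + j + i).choose j := by
  have key := congrArg (Int.cast : ℤ → K)
    (sum_neg_one_pow_mul_choose_mul_choose_add m j (m + j + i))
  push_cast at key
  rw [← key, mul_assoc, mul_sum, mul_sum]
  refine sum_congr rfl fun n hn ↦ ?_
  have hn : n ≤ m := Nat.lt_succ_iff.mp (mem_range.mp hn)
  calc (-1 : K) ^ n / (n ! * (n + i)!) * ((m + j + i + n)! / (m - n)!)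
      = (-1) ^ n * ((m + j + i + n)! / (m - n)! / (n ! * (n + i)!)) := by ring
    _ = (-1) ^ m * (-1) ^ (m - n) *
          ((m + j)! / m ! * (m.choose n * (m + j + i + n).choose (m + j))) := by
      rw [neg_one_pow_mul_neg_one_pow_sub hn, factorial_div_mul_choose_mul_choose i j hn]
    _ = _ := by ring

/-- Identity (14.9), proved by a generating-function argument: for every integer `ℓ ≥ 2`,
`(−1)^ℓ · Σ_{n=0}^{ℓ−2} (−1)^n/(n!·(n+2)!) · (ℓ+2+n)!/(ℓ−2−n)! = (1/2)·(ℓ+2)!/(ℓ−2)!`. -/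
theorem generating_function_sum_identity (ℓ : ℕ) (hℓ : 2 ≤ ℓ) :
    (-1 : ℚ) ^ ℓ *
        ∑ n ∈ Finset.range (ℓ - 1),
          (-1 : ℚ) ^ n / ((Nat.factorial n : ℚ) * (Nat.factorial (n + 2) : ℚ)) *
            ((Nat.factorial (ℓ + 2 + n) : ℚ) / (Nat.factorial (ℓ - 2 - n) : ℚ)) =
      1 / 2 * ((Nat.factorial (ℓ + 2) : ℚ) / (Nat.factorial (ℓ - 2) : ℚ)) := by
  obtain ⟨m, rfl⟩ : ∃ m, ℓ = m + 2 := ⟨ℓ - 2, by omega⟩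
  simp only [Nat.add_sub_cancel, show m + 2 - 1 = m + 1 by omega]
  rw [sum_neg_one_pow_div_factorial_mul_factorial, Nat.cast_choose ℚ (by omega : 2 ≤ m + 2 + 2),
    Nat.add_sub_cancel, ← mul_assoc, ← mul_assoc, ← pow_add,
    Even.neg_one_pow ⟨m + 1, by ring⟩, one_mul]
  have : ((m + 2)! : ℚ) ≠ 0 := by positivity
  field_simp
  norm_num
end
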